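/- arXiv:2304.14793 — 2 statements merged into one kernel-verified Lean document; each statement's English description precedes it below -/
import Mathlib

section
/- If d ∈ ℕ is strictly less than the stable coloring number of a graph G, then there exist two d-reducts of G that are not isomorphic. Combined with the converse direction, there is a single d-reduct of G up to isomorphism if and only if d is at least the stable coloring number of G. -/
open Classical

/-- The multiset of incoming neighbors of `v` in the multigraph with edge
multiplicity function `E` (with `E w v` the multiplicity of edge `w → v`). -/
def inc {V : Type*} [Fintype V] (E : V → V → ℕ) (v : V) : Multiset V :=
  Finset.univ.val.bind fun w => Multiset.replicate (E w v) w

/-- Cap all multiplicities of a multiset at `c ∈ ℕ∞`. -/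
noncomputable def capM {α : Type*} (c : ℕ∞) (M : Multiset α) : Multiset α :=
  letI := Classical.decEq α
  M.toFinset.val.bind fun x => Multiset.replicate ((min (M.count x : ℕ∞) c).toNat) x

/-- The type of colors obtained after `d` steps of color refinement, starting
from base colors in `Y`: a depth-`d` color is the previous color paired with the
multiset of previous colors of the incoming neighbors. -/
def CRt (Y : Type*) : ℕ → Type _
  | 0 => Y
  | (d+1) => CRt Y d × Multiset (CRt Y d)

/-- `d` steps of color refinement, starting from base coloring `g`. -/
def colr {V : Type*} [Fintype V] {Y : Type*} (E : V → V → ℕ) (g : V → Y) :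
    (d : ℕ) → V → CRt Y d
  | 0 => g
  | (d+1) => fun v => (colr E g d v, (inc E v).map (colr E g d))

/-- `d` steps of `c`-graded color refinement. -/
noncomputable def colrC {V : Type*} [Fintype V] {Y : Type*} (c : ℕ∞) (E : V → V → ℕ)
    (g : V → Y) : (d : ℕ) → V → CRt Y d
  | 0 => g
  | (d+1) => fun v => (colrC c E g d v, capM c ((inc E v).map (colrC c E g d)))

/-- The partition induced by `d` refinement steps is stable at `d`. -/
def stableAt {V : Type*} [Fintype V] {Y : Type*} (E : V → V → ℕ) (g : V → Y) (d : ℕ) : Prop :=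
  ∀ v w : V, colr E g d v = colr E g d w ↔ colr E g (d+1) v = colr E g (d+1) w

/-- The stable coloring number: least depth at which color refinement stabilizes. -/
noncomputable def stableNum {V : Type*} [Fintype V] {Y : Type*} (E : V → V → ℕ) (g : V → Y) : ℕ :=
  sInf { d | stableAt E g d }

/-- The stable coloring `colr^∞`. -/
noncomputable def colrInf {V : Type*} [Fintype V] {Y : Type*} (E : V → V → ℕ) (g : V → Y) :
    V → CRt Y (stableNum E g) :=
  colr E g (stableNum E g)

/-- The depth (number of refinement rounds) corresponding to `d ∈ ℕ∞`:
for `d = ∞` it is the stable coloring number of the graph. -/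
noncomputable def edepth {V : Type*} [Fintype V] {Y : Type*} (E : V → V → ℕ) (g : V → Y)
    (d : ℕ∞) : ℕ :=
  WithTop.untopD (stableNum E g) d

/-- Color refinement with depth `d ∈ ℕ∞` (stable coloring for `d = ∞`). -/
noncomputable def colrE' {V : Type*} [Fintype V] {Y : Type*} (E : V → V → ℕ) (g : V → Y)
    (d : ℕ∞) : V → CRt Y (edepth E g d) :=
  colr E g (edepth E g d)

/-- A substitution choosing one representative per class of the coloring `col`:
`ρ v` is in the class of `v`, and `ρ` is constant on classes. -/
def IsSubstWith {V : Type*} {C : Type*} (col : V → C) (ρ : V → V) : Prop :=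
  (∀ v, col (ρ v) = col v) ∧ ∀ v w, col v = col w → ρ v = ρ w

/-- Node set of the reduction: the chosen representatives. -/
def RNodes {V : Type*} (ρ : V → V) : Type _ := { v : V // ∃ u, ρ u = v }

noncomputable instance {V : Type*} [Fintype V] (ρ : V → V) : Fintype (RNodes ρ) := by
  unfold RNodes; exact Subtype.fintype _

instance {V : Type*} [DecidableEq V] (ρ : V → V) : DecidableEq (RNodes ρ) := by
  unfold RNodes; infer_instance

/-- Edge multiplicities of the reduction: `E'(v → w) = Σ_{v' ∈ [v]} E(v' → w)`. -/
noncomputable def reductE {V : Type*} [Fintype V] {C : Type*} (E : V → V → ℕ) (col : V → C)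
    (ρ : V → V) (a b : RNodes ρ) : ℕ :=
  ∑ v' ∈ Finset.univ.filter (fun v' => col v' = col a.val), E v' b.val

/-- Edge multiplicities of the `c`-graded reduction:
`E'(v → w) = min(Σ_{v' ∈ [v]} min(E(v' → w), c), c)`. -/
noncomputable def reductEC {V : Type*} [Fintype V] {C : Type*} (c : ℕ∞) (E : V → V → ℕ)
    (col : V → C) (ρ : V → V) (a b : RNodes ρ) : ℕ :=
  (min (↑(∑ v' ∈ Finset.univ.filter (fun v' => col v' = col a.val),
      (min (E v' b.val : ℕ∞) c).toNat) : ℕ∞) c).toNat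

/-- Coloring of the reduction: colors are inherited. -/
def reductG {V : Type*} {Y : Type*} (g : V → Y) (ρ : V → V) (a : RNodes ρ) : Y := g a.val

/-- A GNN layer of input dimension `p` and output dimension `q`. -/
structure GNNLayer (p q : ℕ) where
  h : ℕ
  agg : Multiset (Fin p → ℝ) → (Fin h → ℝ)
  comb : (Fin p → ℝ) → (Fin h → ℝ) → (Fin q → ℝ)

/-- The feature map transformer computed by a GNN layer. -/
def GNNLayer.apply {p q : ℕ} (L : GNNLayer p q) {V : Type*} [Fintype V]
    (E : V → V → ℕ) (g : V → Fin p → ℝ) : V → Fin q → ℝ :=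
  fun v => L.comb (g v) (L.agg ((inc E v).map g))

/-- A GNN: a nonempty sequence of layers with matching dimensions. -/
inductive GNN : ℕ → ℕ → Type
  | single : ∀ {p q}, GNNLayer p q → GNN p q
  | cons : ∀ {p r q}, GNNLayer p r → GNN r q → GNN p q

/-- Number of layers of a GNN. -/
def GNN.depth : ∀ {p q}, GNN p q → ℕ
  | _, _, .single _ => 1
  | _, _, .cons _ rest => rest.depth + 1

/-- The feature map transformer computed by a GNN. -/
def GNN.apply {V : Type*} [Fintype V] : ∀ {p q}, GNN p q → (V → V → ℕ) →
    (V → Fin p → ℝ) → V → Fin q → ℝ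
  | _, _, .single L, E, g => L.apply E g
  | _, _, .cons L rest, E, g => rest.apply E (L.apply E g)

/-- A GNN layer has width `c` if its aggregation only depends on multiplicities up to `c`. -/
def GNNLayer.HasWidth {p q : ℕ} (c : ℕ∞) (L : GNNLayer p q) : Prop :=
  ∀ M, L.agg M = L.agg (capM c M)

/-- A GNN has width `c` if all its layers do. -/
def GNN.HasWidth (c : ℕ∞) : ∀ {p q}, GNN p q → Prop
  | _, _, .single L => L.HasWidth c
  | _, _, .cons L rest => L.HasWidth c ∧ rest.HasWidth c

/-!
On a `d`-reduct `G/ρ`, `d + 1` rounds of colour refinement give every representative its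
`(d+1)`-colour in `G`: the edges of `G/ρ` into `v` carry exactly the multiset of `d`-colours
of the in-neighbours of `v` in `G`. Since refinement is an isomorphism invariant, two
`d`-reducts `G/ρ₁`, `G/ρ₂` are isomorphic iff the two representatives of each `d`-class have
the same `(d+1)`-colour, and then `a ↦ ρ₂ a` is an isomorphism. At or beyond the stable
colouring number this always holds. Below it some `d`-class contains `v`, `w` with different
`(d+1)`-colours, and the reducts choosing `v`, respectively `w`, as representative differ.
-/

section ColorRefinement

variable {V Y : Type*} [Fintype V] {E : V → V → ℕ} {g : V → Y}

lemma inc_eq_sum (E : V → V → ℕ) (v : V) : inc E v = ∑ w, Multiset.replicate (E w v) w := rfl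

lemma map_inc {α : Type*} (E : V → V → ℕ) (F : V → α) (v : V) :
    (inc E v).map F = ∑ w, Multiset.replicate (E w v) (F w) := by
  rw [inc_eq_sum, ← Multiset.coe_mapAddMonoidHom, map_sum]
  simp only [Multiset.coe_mapAddMonoidHom, Multiset.map_replicate]

lemma count_map_inc {C : Type*} (E : V → V → ℕ) (col : V → C) (c : C) (v : V) :
    ((inc E v).map col).count c = ∑ w ∈ Finset.univ.filter (col · = c), E w v := by
  rw [map_inc, Multiset.count_sum', Finset.sum_filter]
  simp only [Multiset.count_replicate]

lemma colr_eq_of_succ_eq {d : ℕ} {v w : V} (h : colr E g (d+1) v = colr E g (d+1) w) :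
    colr E g d v = colr E g d w :=
  congrArg Prod.fst h

lemma colr_eq_of_le {k d : ℕ} (hkd : k ≤ d) {v w : V} (h : colr E g d v = colr E g d w) :
    colr E g k v = colr E g k w := by
  induction hkd with
  | refl => exact h
  | step _ ih => exact ih (colr_eq_of_succ_eq h)

lemma stableAt.succ {d : ℕ} (h : stableAt E g d) : stableAt E g (d+1) := by
  intro v w
  refine ⟨fun hvw => Prod.ext hvw ?_, colr_eq_of_succ_eq⟩
  have hF : (colr E g (d+1)).FactorsThrough (colr E g d) := fun a b hab => (h a b).mp hab
  set F := Function.extend (colr E g d) (colr E g (d+1)) fun _ => colr E g (d+1) v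
  have hFcomp : ∀ y, F (colr E g d y) = colr E g (d+1) y := hF.extend_apply _
  have hmap : ∀ x, (inc E x).map (colr E g (d+1)) = ((inc E x).map (colr E g d)).map F :=
    fun x => by
      rw [Multiset.map_map]
      exact Multiset.map_congr rfl fun y _ => (hFcomp y).symm
  change (inc E v).map (colr E g (d+1)) = (inc E w).map (colr E g (d+1))
  rw [hmap, hmap]
  exact congrArg _ (congrArg Prod.snd hvw)

lemma stableAt_of_le {d e : ℕ} (h : stableAt E g d) (hde : d ≤ e) : stableAt E g e := by
  induction hde with
  | refl => exact h
  | step _ ih => exact ih.succ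

lemma ncard_range_colr_lt_succ {d : ℕ} (h : ¬ stableAt E g d) :
    (Set.range (colr E g d)).ncard < (Set.range (colr E g (d+1))).ncard := by
  have hrange : Set.range (colr E g d) = Prod.fst '' Set.range (colr E g (d+1)) :=
    Set.range_comp Prod.fst (colr E g (d+1))
  rw [hrange]
  refine lt_of_le_of_ne (Set.ncard_image_le (Set.finite_range _)) fun heq => h fun v w => ?_
  have hinj := Set.injOn_of_ncard_image_eq heq (Set.finite_range _)
  exact ⟨fun hvw => hinj (Set.mem_range_self v) (Set.mem_range_self w) hvw, colr_eq_of_succ_eq⟩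

lemma exists_stableAt (E : V → V → ℕ) (g : V → Y) : ∃ d, stableAt E g d := by
  by_contra! h
  have hmono : StrictMono fun d => (Set.range (colr E g d)).ncard :=
    strictMono_nat_of_lt_succ fun d => ncard_range_colr_lt_succ (h d)
  have hbound : (Set.range (colr E g (Nat.card V + 1))).ncard ≤ Nat.card V :=
    Finite.card_range_le _
  have hgrowth : Nat.card V + 1 ≤ (Set.range (colr E g (Nat.card V + 1))).ncard :=
    hmono.id_le (Nat.card V + 1)
  omega

lemma stableAt_stableNum (E : V → V → ℕ) (g : V → Y) : stableAt E g (stableNum E g) :=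
  Nat.sInf_mem (exists_stableAt E g)

end ColorRefinement

section Substitution

variable {V C : Type*} {col : V → C} {ρ : V → V}

lemma IsSubstWith.apply_val (hρ : IsSubstWith col ρ) (a : RNodes ρ) : ρ a.val = a.val := by
  obtain ⟨u, hu⟩ := a.2
  rw [← hu]
  exact hρ.2 _ _ (hρ.1 u)

lemma IsSubstWith.apply_eq_iff (hρ : IsSubstWith col ρ) (a : RNodes ρ) (v : V) :
    ρ v = a.val ↔ col v = col a.val :=
  ⟨fun h => by rw [← h, hρ.1], fun h => (hρ.2 _ _ h).trans (hρ.apply_val a)⟩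

lemma exists_isSubstWith_apply_eq (col : V → C) (x : V) :
    ∃ ρ, IsSubstWith col ρ ∧ ρ x = x := by
  have : Nonempty V := ⟨x⟩
  refine ⟨fun u => if col u = col x then x else Function.invFun col (col u),
    ⟨fun u => ?_, fun u w h => ?_⟩, if_pos rfl⟩
  · dsimp only
    split_ifs with hu
    · exact hu.symm
    · exact Function.invFun_eq ⟨u, rfl⟩
  · simp only [h]

def toRNodes (ρ : V → V) (v : V) : RNodes ρ := ⟨ρ v, v, rfl⟩

lemma IsSubstWith.sum_fiberwise [Fintype V] {M : Type*} [AddCommMonoid M]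
    (hρ : IsSubstWith col ρ) (f : V → M) :
    ∑ a : RNodes ρ, ∑ v ∈ Finset.univ.filter (col · = col a.val), f v = ∑ v, f v := by
  rw [← Finset.sum_fiberwise Finset.univ (toRNodes ρ) f]
  refine Finset.sum_congr rfl fun a _ => Finset.sum_congr (Finset.filter_congr fun v _ => ?_) fun _ _ => rfl
  exact (hρ.apply_eq_iff a v).symm.trans ⟨fun h => Subtype.ext h, congrArg Subtype.val⟩

def IsSubstWith.rnodesEquiv {ρ₁ ρ₂ : V → V} (h₁ : IsSubstWith col ρ₁) (h₂ : IsSubstWith col ρ₂) :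
    RNodes ρ₁ ≃ RNodes ρ₂ where
  toFun a := toRNodes ρ₂ a.val
  invFun b := toRNodes ρ₁ b.val
  left_inv a := Subtype.ext ((h₁.apply_eq_iff a _).mpr (h₂.1 a.val))
  right_inv b := Subtype.ext ((h₂.apply_eq_iff b _).mpr (h₁.1 b.val))

end Substitution

section Reduct

variable {V Y C : Type*} [Fintype V] {E : V → V → ℕ} {g : V → Y} {col : V → C} {ρ : V → V}

lemma reductE_eq_count (E : V → V → ℕ) (col : V → C) (ρ : V → V) (a b : RNodes ρ) :
    reductE E col ρ a b = ((inc E b.val).map col).count (col a.val) :=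
  (count_map_inc E col _ _).symm

lemma map_inc_reductE {α : Type*} (hρ : IsSubstWith col ρ) {F : V → α}
    (hF : ∀ v w, col v = col w → F v = F w) (a : RNodes ρ) :
    (inc (reductE E col ρ) a).map (fun b : RNodes ρ => F b.val) = (inc E a.val).map F := by
  rw [map_inc, map_inc, ← hρ.sum_fiberwise]
  refine Finset.sum_congr rfl fun b _ => ?_
  rw [reductE, ← Multiset.nsmul_singleton, Finset.sum_smul]
  refine Finset.sum_congr rfl fun v hv => ?_
  rw [hF b.val v (Finset.mem_filter.mp hv).2.symm, Multiset.nsmul_singleton]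

lemma colr_reductE_succ_of_eq {k : ℕ} (hρ : IsSubstWith col ρ)
    (hcol : ∀ v w, col v = col w → colr E g k v = colr E g k w)
    (hk : ∀ a, colr (reductE E col ρ) (reductG g ρ) k a = colr E g k a.val) (a : RNodes ρ) :
    colr (reductE E col ρ) (reductG g ρ) (k+1) a = colr E g (k+1) a.val := by
  refine Prod.ext (hk a) ?_
  change (inc _ a).map (colr _ _ k) = (inc E a.val).map (colr E g k)
  rw [← map_inc_reductE hρ hcol]
  exact Multiset.map_congr rfl fun b _ => hk b

lemma colr_reductE_succ {k : ℕ} (hρ : IsSubstWith col ρ)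
    (hcol : ∀ v w, col v = col w → colr E g k v = colr E g k w) (a : RNodes ρ) :
    colr (reductE E col ρ) (reductG g ρ) (k+1) a = colr E g (k+1) a.val := by
  induction k generalizing a with
  | zero => exact colr_reductE_succ_of_eq hρ hcol (fun _ => rfl) a
  | succ k ih =>
    exact colr_reductE_succ_of_eq hρ hcol (ih fun v w h => colr_eq_of_succ_eq (hcol v w h)) a

end Reduct

section Isomorphism

variable {V₁ V₂ Y : Type*} [Fintype V₁] [Fintype V₂] {E₁ : V₁ → V₁ → ℕ} {E₂ : V₂ → V₂ → ℕ}

lemma inc_equiv_apply (f : V₁ ≃ V₂) (hE : ∀ v w, E₂ (f v) (f w) = E₁ v w) (v : V₁) :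
    inc E₂ (f v) = (inc E₁ v).map f := by
  rw [inc_eq_sum, map_inc, ← f.sum_comp]
  simp only [hE]

lemma colr_equiv_apply {g₁ : V₁ → Y} {g₂ : V₂ → Y} (f : V₁ ≃ V₂) (hg : ∀ v, g₂ (f v) = g₁ v)
    (hE : ∀ v w, E₂ (f v) (f w) = E₁ v w) (k : ℕ) (v : V₁) :
    colr E₂ g₂ k (f v) = colr E₁ g₁ k v := by
  induction k generalizing v with
  | zero => exact hg v
  | succ k ih =>
    refine Prod.ext (ih v) ?_
    change (inc E₂ (f v)).map (colr E₂ g₂ k) = (inc E₁ v).map (colr E₁ g₁ k)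
    rw [inc_equiv_apply f hE, Multiset.map_map]
    exact Multiset.map_congr rfl fun x _ => ih x

end Isomorphism

section Reducts

variable {V Y : Type*} [Fintype V] {E : V → V → ℕ} {g : V → Y} {d : ℕ} {ρ₁ ρ₂ : V → V}

def ReductIso {C : Type*} (E : V → V → ℕ) (g : V → Y) (col : V → C) (ρ₁ ρ₂ : V → V) : Prop :=
  ∃ f : RNodes ρ₁ ≃ RNodes ρ₂, (∀ a, g (f a).val = g a.val) ∧
    ∀ a b, reductE E col ρ₂ (f a) (f b) = reductE E col ρ₁ a b

lemma reductIso_iff (h₁ : IsSubstWith (colr E g d) ρ₁) (h₂ : IsSubstWith (colr E g d) ρ₂) :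
    ReductIso E g (colr E g d) ρ₁ ρ₂ ↔
      ∀ a : RNodes ρ₁, colr E g (d+1) (ρ₂ a.val) = colr E g (d+1) a.val := by
  constructor
  · rintro ⟨f, hg, hE⟩ a
    have hcol : ∀ v w, colr E g d v = colr E g d w → colr E g d v = colr E g d w := fun _ _ => id
    have key : colr E g (d+1) (f a).val = colr E g (d+1) a.val := calc
      _ = colr (reductE E (colr E g d) ρ₂) (reductG g ρ₂) (d+1) (f a) :=
        (colr_reductE_succ h₂ hcol (f a)).symm
      _ = colr (reductE E (colr E g d) ρ₁) (reductG g ρ₁) (d+1) a := colr_equiv_apply f hg hE _ a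
      _ = _ := colr_reductE_succ h₁ hcol a
    rwa [(h₂.apply_eq_iff (f a) a.val).mpr (colr_eq_of_succ_eq key).symm]
  · intro h
    refine ⟨h₁.rnodesEquiv h₂, fun a => colr_eq_of_le (Nat.zero_le d) (h₂.1 a.val),
      fun a b => ?_⟩
    change reductE E (colr E g d) ρ₂ (toRNodes ρ₂ a.val) (toRNodes ρ₂ b.val) = _
    rw [reductE_eq_count, reductE_eq_count]
    change ((colr E g (d+1) (ρ₂ b.val)).2).count (colr E g d (ρ₂ a.val)) =
      ((colr E g (d+1) b.val).2).count (colr E g d a.val)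
    rw [h b, h₂.1 a.val]

lemma exists_not_reductIso_of_not_stableAt (h : ¬ stableAt E g d) :
    ∃ ρ₁ ρ₂ : V → V, IsSubstWith (colr E g d) ρ₁ ∧ IsSubstWith (colr E g d) ρ₂ ∧
      ¬ ReductIso E g (colr E g d) ρ₁ ρ₂ := by
  simp only [stableAt, not_forall] at h
  obtain ⟨v, w, hvw⟩ := h
  have hd : colr E g d v = colr E g d w := by
    by_contra hne
    exact hvw (iff_of_false hne (mt colr_eq_of_succ_eq hne))
  have hd1 : colr E g (d+1) v ≠ colr E g (d+1) w := fun heq => hvw (iff_of_true hd heq)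
  obtain ⟨ρ₁, h₁, hv⟩ := exists_isSubstWith_apply_eq (colr E g d) v
  obtain ⟨ρ₂, h₂, hw⟩ := exists_isSubstWith_apply_eq (colr E g d) w
  refine ⟨ρ₁, ρ₂, h₁, h₂, fun hiso => hd1 ?_⟩
  have hrep := (reductIso_iff h₁ h₂).mp hiso ⟨v, v, hv⟩
  rwa [h₂.2 v w hd, hw, eq_comm] at hrep

end Reducts

theorem reducts_unique_iff_stable_general {V Y : Type*} [Fintype V]
    (E : V → V → ℕ) (g : V → Y) (d : ℕ) :
    ((d < stableNum E g) → ∃ ρ₁ ρ₂ : V → V,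
      IsSubstWith (colr E g d) ρ₁ ∧ IsSubstWith (colr E g d) ρ₂ ∧
      ¬ ∃ f : RNodes ρ₁ ≃ RNodes ρ₂,
          (∀ a, g (f a).val = g a.val) ∧
          ∀ a b, reductE E (colr E g d) ρ₂ (f a) (f b) = reductE E (colr E g d) ρ₁ a b) ∧
    ((∀ ρ₁ ρ₂ : V → V, IsSubstWith (colr E g d) ρ₁ → IsSubstWith (colr E g d) ρ₂ →
      ∃ f : RNodes ρ₁ ≃ RNodes ρ₂,
          (∀ a, g (f a).val = g a.val) ∧
          ∀ a b, reductE E (colr E g d) ρ₂ (f a) (f b) = reductE E (colr E g d) ρ₁ a b)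
      ↔ stableNum E g ≤ d) := by
  have below : d < stableNum E g → ∃ ρ₁ ρ₂ : V → V, IsSubstWith (colr E g d) ρ₁ ∧
      IsSubstWith (colr E g d) ρ₂ ∧ ¬ ReductIso E g (colr E g d) ρ₁ ρ₂ :=
    fun hd => exists_not_reductIso_of_not_stableAt (Nat.notMem_of_lt_sInf hd)
  refine ⟨below, fun huniq => ?_, fun hle ρ₁ ρ₂ h₁ h₂ => ?_⟩
  · by_contra! hd
    obtain ⟨ρ₁, ρ₂, h₁, h₂, hnot⟩ := below hd
    exact hnot (huniq ρ₁ ρ₂ h₁ h₂)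
  · have hst : stableAt E g d := stableAt_of_le (stableAt_stableNum E g) hle
    exact (reductIso_iff h₁ h₂).mpr fun a => (hst _ _).mp (h₂.1 a.val)

/-- below the stable coloring number there are non-isomorphic
`d`-reducts; all `d`-reducts are isomorphic iff `d` is at least the stable
coloring number. -/
theorem reducts_unique_iff_stable {V Y : Type*} [Fintype V] [DecidableEq V]
    (E : V → V → ℕ) (g : V → Y) (d : ℕ) :
    ((d < stableNum E g) → ∃ ρ₁ ρ₂ : V → V,
      IsSubstWith (colr E g d) ρ₁ ∧ IsSubstWith (colr E g d) ρ₂ ∧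
      ¬ ∃ f : RNodes ρ₁ ≃ RNodes ρ₂,
          (∀ a, g (f a).val = g a.val) ∧
          ∀ a b, reductE E (colr E g d) ρ₂ (f a) (f b) = reductE E (colr E g d) ρ₁ a b) ∧
    ((∀ ρ₁ ρ₂ : V → V, IsSubstWith (colr E g d) ρ₁ → IsSubstWith (colr E g d) ρ₂ →
      ∃ f : RNodes ρ₁ ≃ RNodes ρ₂,
          (∀ a, g (f a).val = g a.val) ∧
          ∀ a b, reductE E (colr E g d) ρ₂ (f a) (f b) = reductE E (colr E g d) ρ₁ a b)
      ↔ stableNum E g ≤ d) :=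
  reducts_unique_iff_stable_general E g d
end

section
/- Let ρ be a d-substitution on G such that for every node v, the representative ρ(v) has minimal d-incidence within its class: incid^d_G(ρ(v)) = min over v' ∈ [v]_d of incid^d_G(v'). Then the size of G/ρ (number of nodes plus number of distinct edges) is minimal among all d-reducts of G. -/
open Classical

/-!
Every `d`-reduct has exactly one node per `d`-class, so all reducts have the same number of
nodes. The distinct edges of `G/ρ` entering a representative `w` correspond to the classes of
its in-neighbours in `G`, so the edge count of `G/ρ` is the sum of `incid^d_G(w)` over the
representatives `w`; choosing each representative of minimal incidence minimizes every summand.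
-/

section Reduct

variable {V C : Type*}

/-- With `col = colr^d`, this is the `d`-incidence `incid^d_G(v)`. -/
noncomputable def incid (col : V → C) (E : V → V → ℕ) (v : V) : ℕ :=
  (col '' { u : V | 0 < E u v }).ncard

namespace IsSubstWith

variable {col : V → C} {σ μ : V → V}

lemma apply_val_s15 (hσ : IsSubstWith col σ) (b : RNodes σ) : σ b.val = b.val := by
  obtain ⟨_, u, rfl⟩ := b
  exact hσ.2 _ _ (hσ.1 u)

lemma injective_col_val (hσ : IsSubstWith col σ) :
    Function.Injective fun a : RNodes σ => col a.val := fun a a' h =>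
  Subtype.ext <| by rw [← hσ.apply_val_s15 a, ← hσ.apply_val_s15 a']; exact hσ.2 _ _ h

lemma range_col_val (hσ : IsSubstWith col σ) :
    Set.range (fun a : RNodes σ => col a.val) = Set.range col := by
  refine Set.Subset.antisymm (Set.range_comp_subset_range _ _) ?_
  rintro _ ⟨u, rfl⟩
  exact ⟨⟨σ u, u, rfl⟩, hσ.1 u⟩

def rnodesEquiv_s15 (hσ : IsSubstWith col σ) (hμ : IsSubstWith col μ) :
    RNodes σ ≃ RNodes μ where
  toFun b := ⟨μ b.val, b.val, rfl⟩
  invFun a := ⟨σ a.val, a.val, rfl⟩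
  left_inv b := Subtype.ext <| (hσ.2 _ _ (hμ.1 b.val)).trans (hσ.apply_val_s15 b)
  right_inv a := Subtype.ext <| (hμ.2 _ _ (hσ.1 a.val)).trans (hμ.apply_val_s15 a)

end IsSubstWith

lemma reductE_pos_iff [Fintype V] (E : V → V → ℕ) (col : V → C) (σ : V → V)
    (a b : RNodes σ) :
    0 < reductE E col σ a b ↔ col a.val ∈ col '' { u : V | 0 < E u b.val } := by
  simp only [reductE, Finset.sum_pos_iff, Finset.mem_filter, Finset.mem_univ, true_and,
    Set.mem_image, Set.mem_ofPred_eq]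
  exact ⟨fun ⟨u, hcu, hu⟩ => ⟨u, hu, hcu⟩, fun ⟨u, hu, hcu⟩ => ⟨u, hcu, hu⟩⟩

lemma ncard_setOf_prod_eq_sum {A B : Type*} [Fintype B] [Finite A] (p : A → B → Prop) :
    { e : A × B | p e.1 e.2 }.ncard = ∑ b, { a : A | p a b }.ncard := by
  simp only [← Nat.card_coe_set_eq, Set.coe_ofPred]
  have swap : { e : A × B // p e.1 e.2 } ≃ Σ b, { a : A // p a b } :=
    ((Equiv.prodComm A B).subtypeEquiv (q := fun x => p x.2 x.1) fun _ => Iff.rfl).trans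
      (Equiv.subtypeProdEquivSigmaSubtype fun b a => p a b)
  rw [Nat.card_congr swap, Nat.card_sigma]

lemma ncard_reductE_pos_left [Fintype V] (E : V → V → ℕ) {col : V → C} {σ : V → V}
    (hσ : IsSubstWith col σ) (b : RNodes σ) :
    { a : RNodes σ | 0 < reductE E col σ a b }.ncard = incid col E b.val := by
  have hpre : { a : RNodes σ | 0 < reductE E col σ a b }
      = (fun a : RNodes σ => col a.val) ⁻¹' (col '' { u : V | 0 < E u b.val }) :=
    Set.ext fun a => reductE_pos_iff E col σ a b
  rw [incid, hpre, ← Set.ncard_image_of_injective _ hσ.injective_col_val,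
    Set.image_preimage_eq_of_subset (hσ.range_col_val ▸ Set.image_subset_range _ _)]

lemma ncard_reductE_pos [Fintype V] (E : V → V → ℕ) {col : V → C} {σ : V → V}
    (hσ : IsSubstWith col σ) :
    { e : RNodes σ × RNodes σ | 0 < reductE E col σ e.1 e.2 }.ncard
      = ∑ b : RNodes σ, incid col E b.val :=
  (ncard_setOf_prod_eq_sum _).trans <|
    Finset.sum_congr rfl fun b _ => ncard_reductE_pos_left E hσ b

theorem reduct_size_le_of_incid_le [Fintype V] (E : V → V → ℕ) {col : V → C}
    {ρ μ : V → V} (hρ : IsSubstWith col ρ) (hμ : IsSubstWith col μ)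
    (hmin : ∀ v v' : V, col v = col v' → incid col E (ρ v) ≤ incid col E v') :
    Fintype.card (RNodes ρ) + { e : RNodes ρ × RNodes ρ | 0 < reductE E col ρ e.1 e.2 }.ncard
      ≤ Fintype.card (RNodes μ)
        + { e : RNodes μ × RNodes μ | 0 < reductE E col μ e.1 e.2 }.ncard := by
  let e := hρ.rnodesEquiv_s15 hμ
  rw [ncard_reductE_pos E hρ, ncard_reductE_pos E hμ, Fintype.card_congr e,
    ← e.sum_comp fun a => incid col E a.val]
  gcongr with b
  rw [← hρ.apply_val_s15 b]
  exact hmin b.val (μ b.val) (hμ.1 b.val).symm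

end Reduct

theorem reduct_minimal_size_general {V Y : Type*} [Fintype V]
    (E : V → V → ℕ) (g : V → Y) (d : ℕ∞) (ρ : V → V)
    (hρ : IsSubstWith (colrE' E g d) ρ)
    (hmin : ∀ v v' : V, colrE' E g d v = colrE' E g d v' →
      ((colrE' E g d) '' { u : V | 0 < E u (ρ v) }).ncard
        ≤ ((colrE' E g d) '' { u : V | 0 < E u v' }).ncard) :
    ∀ μ : V → V, IsSubstWith (colrE' E g d) μ →
      Fintype.card (RNodes ρ)
          + { e : RNodes ρ × RNodes ρ | 0 < reductE E (colrE' E g d) ρ e.1 e.2 }.ncard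
        ≤ Fintype.card (RNodes μ)
          + { e : RNodes μ × RNodes μ | 0 < reductE E (colrE' E g d) μ e.1 e.2 }.ncard :=
  fun _ hμ => reduct_size_le_of_incid_le E hρ hμ hmin

/-- a substitution picking representatives of minimal `d`-incidence
yields a `d`-reduct of minimal size (nodes plus distinct edges). -/
theorem reduct_minimal_size {V Y : Type*} [Fintype V] [DecidableEq V]
    (E : V → V → ℕ) (g : V → Y) (d : ℕ∞) (ρ : V → V)
    (hρ : IsSubstWith (colrE' E g d) ρ)
    (hmin : ∀ v v' : V, colrE' E g d v = colrE' E g d v' →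
      ((colrE' E g d) '' { u : V | 0 < E u (ρ v) }).ncard
        ≤ ((colrE' E g d) '' { u : V | 0 < E u v' }).ncard) :
    ∀ μ : V → V, IsSubstWith (colrE' E g d) μ →
      Fintype.card (RNodes ρ)
          + { e : RNodes ρ × RNodes ρ | 0 < reductE E (colrE' E g d) ρ e.1 e.2 }.ncard
        ≤ Fintype.card (RNodes μ)
          + { e : RNodes μ × RNodes μ | 0 < reductE E (colrE' E g d) μ e.1 e.2 }.ncard :=
  reduct_minimal_size_general E g d ρ hρ hmin
end
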